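/- arXiv:math/0312421 — 2 statements merged into one kernel-verified Lean document; each statement's English description precedes it below -/
import Mathlib

section
/- Let S be an endomorphism of ℍ² (quaternionic right vector space) with S² = −Id. Then for each nonzero v ∈ ℍ², the quaternionic line vℍ is S-invariant if and only if Sv = v·q for some quaternion q with q² = −1. Moreover S always has at least one invariant quaternionic line (every 2-sphere in S⁴ = ℍP¹ is nonempty). -/
/-!
A quaternionic line `ℍ v` is `S`-invariant exactly when `v` is an eigenvector, `S v = q • v`;
applying `S` twice gives `q² • v = S² v = -v`, so `q² = -1`. For existence, fix any `q` with
`q² = -1` and any `w`: since `S` commutes with left scalars,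
`S (q • w + S w) = q • (q • w + S w)`, so either `q • w + S w` is an eigenvector for `q`,
or it vanishes and `w` is one for `-q`.
-/

open Quaternion

section

variable {R M : Type*} [Ring R] [AddCommGroup M] [Module R M]

theorem Submodule.map_span_singleton_le_iff (f : M →ₗ[R] M) (v : M) :
    (span R {v}).map f ≤ span R {v} ↔ ∃ q : R, f v = q • v := by
  rw [map_span, Set.image_singleton, span_singleton_le_iff_mem, mem_span_singleton]
  exact exists_congr fun _ ↦ eq_comm

variable {f : M →ₗ[R] M}

theorem LinearMap.apply_apply_of_comp_self_eq_neg_id (hf : f ∘ₗ f = -LinearMap.id) (x : M) :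
    f (f x) = -x :=
  LinearMap.congr_fun hf x

theorem LinearMap.sq_eq_neg_one_of_apply_eq_smul [IsCancelMulZero R] [Module.IsTorsionFree R M]
    (hf : f ∘ₗ f = -LinearMap.id) {v : M} (hv : v ≠ 0) {q : R} (hq : f v = q • v) :
    q ^ 2 = -1 := by
  have hsq : (q ^ 2) • v = -v := by
    rw [← f.apply_apply_of_comp_self_eq_neg_id hf v, hq, map_smul, hq, smul_smul, pow_two]
  have h : (q ^ 2 + 1) • v = 0 := by
    rw [add_smul, one_smul, hsq, neg_add_cancel]
  exact eq_neg_of_add_eq_zero_left ((smul_eq_zero.mp h).resolve_right hv)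

theorem LinearMap.exists_apply_eq_smul_of_comp_self_eq_neg_id [Nontrivial M]
    (hf : f ∘ₗ f = -LinearMap.id) {q : R} (hq : q ^ 2 = -1) :
    ∃ v : M, v ≠ 0 ∧ ∃ p : R, f v = p • v := by
  obtain ⟨w, hw⟩ := exists_ne (0 : M)
  by_cases hv : q • w + f w = 0
  · exact ⟨w, hw, -q, by rw [neg_smul, eq_neg_iff_add_eq_zero, add_comm, hv]⟩
  · refine ⟨q • w + f w, hv, q, ?_⟩
    rw [map_add, map_smul, f.apply_apply_of_comp_self_eq_neg_id hf, smul_add, smul_smul,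
      ← pow_two, hq, neg_one_smul, add_comm]

end

/-- Let `S` be an `ℍ`-linear endomorphism of `ℍ²` with `S² = −Id`. Then (1) for `v ≠ 0`
the quaternionic line through `v` is `S`-invariant iff `S v = q • v` for some quaternion
`q` with `q² = −1`, and (2) there exists at least one `S`-invariant quaternionic line. -/
theorem stmt_15 (S : (Fin 2 → ℍ[ℝ]) →ₗ[ℍ[ℝ]] (Fin 2 → ℍ[ℝ]))
    (hS : S ∘ₗ S = -LinearMap.id) :
    (∀ v : Fin 2 → ℍ[ℝ], v ≠ 0 →
      (Submodule.map S (Submodule.span ℍ[ℝ] {v}) ≤ Submodule.span ℍ[ℝ] {v} ↔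
        ∃ q : ℍ[ℝ], S v = q • v ∧ q ^ 2 = -1)) ∧
    ∃ v : Fin 2 → ℍ[ℝ], v ≠ 0 ∧
      Submodule.map S (Submodule.span ℍ[ℝ] {v}) ≤ Submodule.span ℍ[ℝ] {v} := by
  refine ⟨fun v hv ↦ ?_, ?_⟩
  · rw [Submodule.map_span_singleton_le_iff]
    exact ⟨fun ⟨q, hq⟩ ↦ ⟨q, hq, S.sq_eq_neg_one_of_apply_eq_smul hS hv hq⟩,
      fun ⟨q, hq, _⟩ ↦ ⟨q, hq⟩⟩
  · have hi : (⟨0, 1, 0, 0⟩ : ℍ[ℝ]) ^ 2 = -1 := by ext <;> simp [pow_two]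
    obtain ⟨v, hv, hSv⟩ := S.exists_apply_eq_smul_of_comp_self_eq_neg_id hS hi
    exact ⟨v, hv, (Submodule.map_span_singleton_le_iff S v).mpr hSv⟩
end

section
/- Holomorphic family kernel semicontinuity: let T : ℂ → Hom(E, F) be an analytic (holomorphic) family of linear maps between finite-dimensional complex vector spaces. Then the set {μ : dim ker T(μ) > k} is either all of ℂ or discrete, where k is the generic (minimal) kernel dimension; equivalently, dim ker T(μ) equals its minimum value for all μ outside a discrete set. -/
/-!
Fix `μ₁` with `dim ker T(μ₁) = k` and let `R` be the range of `T(μ₁)`. Choose a section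
`u : R → E` of `T(μ₁)` and a continuous projection `v : F → R`, so that `v ∘ T(μ₁) ∘ u = id`.
Then `g(μ) = det (v ∘ T(μ) ∘ u)` is an entire function with `g(μ₁) = 1`, and wherever
`g(μ) ≠ 0` the map `T(μ)` has rank at least `dim R`, hence kernel dimension at most `k`.
So the exceptional set lies in the zero set of `g`, which has no accumulation point.
-/

open Filter Topology Set Module

section Analytic

variable {𝕜 X : Type*} [NontriviallyNormedField 𝕜] [NormedAddCommGroup X] [NormedSpace 𝕜 X]
  {x : X}

theorem AnalyticAt.matrix_det {ι : Type*} [Fintype ι] [DecidableEq ι] {A : X → Matrix ι ι 𝕜}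
    (hA : ∀ i j, AnalyticAt 𝕜 (fun z => A z i j) x) :
    AnalyticAt 𝕜 (fun z => (A z).det) x := by
  simp only [Matrix.det_apply, Units.smul_def, zsmul_eq_mul]
  fun_prop

variable [CompleteSpace 𝕜] {V : Type*} [NormedAddCommGroup V] [NormedSpace 𝕜 V]
  [FiniteDimensional 𝕜 V]

theorem AnalyticAt.linearMap_det {f : X → V →L[𝕜] V} (hf : AnalyticAt 𝕜 f x) :
    AnalyticAt 𝕜 (fun z => LinearMap.det (f z : V →ₗ[𝕜] V)) x := by
  let b := Module.finBasis 𝕜 V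
  simp_rw [← LinearMap.det_toMatrix b]
  refine AnalyticAt.matrix_det fun i j => ?_
  simp only [LinearMap.toMatrix_apply]
  exact (((b.coord i).toContinuousLinearMap ∘L
    ContinuousLinearMap.apply 𝕜 V (b j)).analyticAt _).comp hf

theorem AnalyticAt.det_comp_comp {E F : Type*} [NormedAddCommGroup E] [NormedSpace 𝕜 E]
    [NormedAddCommGroup F] [NormedSpace 𝕜 F] {f : X → E →L[𝕜] F} (hf : AnalyticAt 𝕜 f x)
    (u : V →L[𝕜] E) (v : F →L[𝕜] V) :
    AnalyticAt 𝕜 (fun z => LinearMap.det (v ∘L f z ∘L u).toLinearMap) x :=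
  AnalyticAt.linearMap_det <| ((ContinuousLinearMap.compL 𝕜 V F V v ∘L
    (ContinuousLinearMap.compL 𝕜 V E F).flip u).analyticAt _).comp hf

end Analytic

theorem AnalyticOnNhd.not_accPt_setOf_eq_zero {𝕜 E : Type*} [NontriviallyNormedField 𝕜]
    [PreconnectedSpace 𝕜] [NormedAddCommGroup E] [NormedSpace 𝕜 E] {g : 𝕜 → E}
    (hg : AnalyticOnNhd 𝕜 g univ) {μ₁ : 𝕜} (hμ₁ : g μ₁ ≠ 0) (μ₀ : 𝕜) :
    ¬ AccPt μ₀ (𝓟 {μ | g μ = 0}) := by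
  rw [accPt_iff_frequently_nhdsNE]
  exact fun h => hμ₁ <| hg.eqOn_zero_of_preconnected_of_frequently_eq_zero isPreconnected_univ
    (mem_univ μ₀) h (mem_univ μ₁)

section Rank

variable {K E F : Type*} [Field K] [AddCommGroup E] [Module K E] [FiniteDimensional K E]
  [AddCommGroup F] [Module K F]

theorem LinearMap.finrank_le_finrank_range_of_det_comp_ne_zero {V : Type*} [AddCommGroup V]
    [Module K V] [FiniteDimensional K V] (f : E →ₗ[K] F) (u : V →ₗ[K] E) (v : F →ₗ[K] V)
    (h : LinearMap.det (v ∘ₗ f ∘ₗ u) ≠ 0) : finrank K V ≤ finrank K (LinearMap.range f) := by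
  have hinj : Function.Injective (f ∘ₗ u) :=
    .of_comp (f := v) (LinearMap.equivOfDetNeZero _ h).injective
  calc finrank K V = finrank K (LinearMap.range (f ∘ₗ u)) :=
        (LinearMap.finrank_range_of_inj hinj).symm
    _ ≤ finrank K (LinearMap.range f) :=
        Submodule.finrank_mono (LinearMap.range_comp_le_range u f)

theorem LinearMap.finrank_ker_le_of_finrank_range_le {G : Type*} [AddCommGroup G] [Module K G]
    {f : E →ₗ[K] F} {g : E →ₗ[K] G}
    (h : finrank K (LinearMap.range g) ≤ finrank K (LinearMap.range f)) :
    finrank K (ker f) ≤ finrank K (ker g) := by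
  have := f.finrank_range_add_finrank_ker
  have := g.finrank_range_add_finrank_ker
  omega

end Rank

theorem ContinuousLinearMap.exists_comp_comp_eq_id_range {𝕜 E F : Type*} [RCLike 𝕜]
    [NormedAddCommGroup E] [NormedSpace 𝕜 E] [FiniteDimensional 𝕜 E]
    [NormedAddCommGroup F] [NormedSpace 𝕜 F] (f : E →L[𝕜] F) :
    ∃ (u : LinearMap.range (f : E →ₗ[𝕜] F) →L[𝕜] E)
      (v : F →L[𝕜] LinearMap.range (f : E →ₗ[𝕜] F)), v ∘L f ∘L u = .id 𝕜 _ := by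
  obtain ⟨u, hu⟩ := (f : E →ₗ[𝕜] F).rangeRestrict.exists_rightInverse_of_surjective
    (f : E →ₗ[𝕜] F).range_rangeRestrict
  obtain ⟨v, hv⟩ :=
    Submodule.ClosedComplemented.of_finiteDimensional (LinearMap.range (f : E →ₗ[𝕜] F))
  refine ⟨LinearMap.toContinuousLinearMap u, v, ?_⟩
  ext y
  have hfu : f (u y) = y := congr(Subtype.val $(congr($hu y)))
  simp [hfu, hv]

theorem stmt_18_general (E F : Type*) [NormedAddCommGroup E] [NormedSpace ℂ E]
    [FiniteDimensional ℂ E] [NormedAddCommGroup F] [NormedSpace ℂ F]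
    (T : ℂ → (E →L[ℂ] F))
    (hT : ∀ μ : ℂ, AnalyticAt ℂ T μ) (k : ℕ)
    (hk : IsLeast {n : ℕ | ∃ μ : ℂ, n = Module.finrank ℂ (LinearMap.ker (T μ : E →ₗ[ℂ] F))} k) :
    ∀ μ₀ : ℂ, ¬ AccPt μ₀
      (Filter.principal {μ : ℂ | k < Module.finrank ℂ (LinearMap.ker (T μ : E →ₗ[ℂ] F))}) := by
  obtain ⟨⟨μ₁, rfl⟩, -⟩ := hk
  obtain ⟨u, v, hvu⟩ := (T μ₁).exists_comp_comp_eq_id_range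
  set g : ℂ → ℂ := fun μ => LinearMap.det (v ∘L T μ ∘L u).toLinearMap
  have hg : AnalyticOnNhd ℂ g univ := fun μ _ => (hT μ).det_comp_comp u v
  have hgμ₁ : g μ₁ = 1 := by
    simp only [g, hvu, ContinuousLinearMap.coe_id, LinearMap.det_id]
  have hbad : {μ | finrank ℂ (LinearMap.ker (T μ₁ : E →ₗ[ℂ] F)) <
      finrank ℂ (LinearMap.ker (T μ : E →ₗ[ℂ] F))} ⊆ {μ | g μ = 0} := by
    intro μ hμ
    by_contra hgμ
    exact hμ.not_ge <| LinearMap.finrank_ker_le_of_finrank_range_le <|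
      LinearMap.finrank_le_finrank_range_of_det_comp_ne_zero _ _ _ hgμ
  exact fun μ₀ hacc =>
    hg.not_accPt_setOf_eq_zero (hgμ₁ ▸ one_ne_zero) μ₀ (hacc.mono (principal_mono.2 hbad))

/-- Kernel semicontinuity for a holomorphic family of linear maps between
finite-dimensional complex vector spaces: if `k` is the minimal (generic) kernel
dimension, then the set of parameters where the kernel dimension exceeds `k` is
discrete (has no accumulation point). -/
theorem stmt_18 (E F : Type*) [NormedAddCommGroup E] [NormedSpace ℂ E]
    [FiniteDimensional ℂ E] [NormedAddCommGroup F] [NormedSpace ℂ F]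
    [FiniteDimensional ℂ F] (T : ℂ → (E →L[ℂ] F))
    (hT : ∀ μ : ℂ, AnalyticAt ℂ T μ) (k : ℕ)
    (hk : IsLeast {n : ℕ | ∃ μ : ℂ, n = Module.finrank ℂ (LinearMap.ker (T μ : E →ₗ[ℂ] F))} k) :
    ∀ μ₀ : ℂ, ¬ AccPt μ₀
      (Filter.principal {μ : ℂ | k < Module.finrank ℂ (LinearMap.ker (T μ : E →ₗ[ℂ] F))}) :=
  stmt_18_general E F T hT k hk
end
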